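/- Let n, a, b, t be positive integers and let M = max over u, v, s ∈ [n] with u + v ≥ s + t of C(s,u) · C(n−s, a−u) · C(s,v) · C(n−s, b−v). Then M ≤ N_prod(n,a,b,t) ≤ n³ · M. -/

import Mathlib

open Finset

/-- The ground set `[n] = {1,…,n}`. -/
def gs (n : ℕ) : Finset ℕ := Finset.Icc 1 n

/-- `F` is an `m`-uniform family of subsets of `[n]`. -/
def UniformOn (n m : ℕ) (F : Finset (Finset ℕ)) : Prop :=
  ∀ A ∈ F, A ⊆ gs n ∧ A.card = m

/-- `F` and `G` are cross-`t`-intersecting. -/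
def CrossInt (t : ℕ) (F G : Finset (Finset ℕ)) : Prop :=
  ∀ A ∈ F, ∀ B ∈ G, t ≤ (A ∩ B).card

/-- The maximum of `|F| ⬝ |G|` over cross-`t`-intersecting pairs where `F` is an
`a`-uniform family and `G` a `b`-uniform family of subsets of `[n]`. -/
noncomputable def NProd (n a b t : ℕ) : ℕ :=
  sSup {x : ℕ | ∃ F G : Finset (Finset ℕ),
    UniformOn n a F ∧ UniformOn n b G ∧ CrossInt t F G ∧ x = F.card * G.card}

/-- The binomial coefficient `C(m, k)` for an integer lower index `k`
(equal to `0` when `k < 0`). -/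
def chooseZ (m : ℕ) (k : ℤ) : ℕ := if 0 ≤ k then m.choose k.toNat else 0

/-!
For the lower bound, fix `s ≤ n` and `u + v ≥ s + t`: the `a`-sets meeting `[s]` in `u` points
and the `b`-sets meeting `[s]` in `v` points are cross-`t`-intersecting (two such sets share at
least `u + v - s` points of `[s]`), and the product of their sizes is the term of `M` at
`(u, v, s)`.

For the upper bound, compressing both families along `{x} → {y}` with `0 < x < y` preserves
uniformity, sizes and cross-`t`-intersection and lowers the total weight
`∑ A ∈ F, ∑ i ∈ A, i`, so `F` may be assumed shifted. Then every `A ∈ F`, `B ∈ G` have a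
prefix `[s]` with `|A ∩ [s]| + |B ∩ [s]| ≥ s + t`: if `A` were a lightest counterexample,
moving the first common element of `A` and `B` beyond the first gap `x` of `A ∪ B` down to `x`
would give a lighter one. So `F × G` is covered by at most `n³` products of the slices above.
-/

open UV
open scoped FinsetFamily

@[simp] lemma mem_gs {n x : ℕ} : x ∈ gs n ↔ 1 ≤ x ∧ x ≤ n := mem_Icc

@[simp] lemma card_gs (n : ℕ) : #(gs n) = n := by simp [gs]

lemma card_inter_add_card_inter {α : Type*} [DecidableEq α] (A B S : Finset α) :
    #(A ∩ S) + #(B ∩ S) = #((A ∪ B) ∩ S) + #(A ∩ B ∩ S) := by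
  rw [← card_union_add_card_inter, ← union_inter_distrib_right, inter_inter_inter_comm,
    inter_self]

section Slices

variable {n m s u : ℕ} {A : Finset ℕ}

def prefixSlice (n m s u : ℕ) : Finset (Finset ℕ) :=
  {A ∈ (gs n).powersetCard m | #(A ∩ gs s) = u}

lemma mem_prefixSlice :
    A ∈ prefixSlice n m s u ↔ (A ⊆ gs n ∧ #A = m) ∧ #(A ∩ gs s) = u := by
  rw [prefixSlice, mem_filter, mem_powersetCard]

lemma uniformOn_prefixSlice : UniformOn n m (prefixSlice n m s u) :=
  fun _ hA => (mem_prefixSlice.1 hA).1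

lemma crossInt_prefixSlice {a b t v : ℕ} (huv : s + t ≤ u + v) :
    CrossInt t (prefixSlice n a s u) (prefixSlice n b s v) := by
  intro A hA B hB
  have hu := (mem_prefixSlice.1 hA).2
  have hv := (mem_prefixSlice.1 hB).2
  have h1 := card_inter_add_card_inter A B (gs s)
  have h2 : #((A ∪ B) ∩ gs s) ≤ s := (card_le_card inter_subset_right).trans (card_gs s).le
  have h3 : #(A ∩ B ∩ gs s) ≤ #(A ∩ B) := card_le_card inter_subset_left
  omega

lemma card_prefixSlice (hs : s ≤ n) :
    #(prefixSlice n m s u) = s.choose u * chooseZ (n - s) ((m : ℤ) - u) := by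
  rcases lt_or_ge m u with hmu | hum
  · rw [chooseZ, if_neg (by omega), mul_zero, card_eq_zero, eq_empty_iff_forall_notMem]
    intro A hA
    obtain ⟨⟨-, hAm⟩, hAu⟩ := mem_prefixSlice.1 hA
    have := card_le_card (inter_subset_left : A ∩ gs s ⊆ A)
    omega
  have hsub : gs s ⊆ gs n := Icc_subset_Icc_right hs
  rw [chooseZ, if_pos (by omega), show ((m : ℤ) - u).toNat = m - u by omega]
  have hsplit : ∀ P Q, P ⊆ gs s → Q ⊆ gs n \ gs s →
      (P ∪ Q) ∩ gs s = P ∧ (P ∪ Q) \ gs s = Q := by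
    intro P Q hP hQ
    have hQs : Q ∩ gs s = ∅ :=
      disjoint_iff_inter_eq_empty.1 (disjoint_of_subset_left hQ sdiff_disjoint)
    rw [union_inter_distrib_right, inter_eq_left.2 hP, hQs, union_empty, union_sdiff_distrib,
      sdiff_eq_empty_iff_subset.2 hP, empty_union, Finset.sdiff_eq_self_iff_disjoint]
    exact ⟨rfl, disjoint_iff_inter_eq_empty.2 hQs⟩
  calc #(prefixSlice n m s u)
      = #((gs s).powersetCard u ×ˢ (gs n \ gs s).powersetCard (m - u)) := by
        refine card_nbij' (fun A => (A ∩ gs s, A \ gs s)) (fun p => p.1 ∪ p.2) ?_ ?_ ?_ ?_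
        · intro A hA
          obtain ⟨⟨hAn, hAm⟩, hAu⟩ := mem_prefixSlice.1 hA
          simp only [coe_product, Set.mem_prod, mem_coe, mem_powersetCard]
          refine ⟨⟨inter_subset_right, hAu⟩, sdiff_subset_sdiff hAn subset_rfl, ?_⟩
          have := card_inter_add_card_sdiff A (gs s)
          omega
        · rintro ⟨P, Q⟩ hPQ
          simp only [coe_product, Set.mem_prod, mem_coe, mem_powersetCard] at hPQ
          obtain ⟨⟨hP, hPu⟩, hQ, hQm⟩ := hPQ
          have hdisj : Disjoint P Q := disjoint_sdiff.mono hP hQ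
          rw [mem_coe, mem_prefixSlice, (hsplit P Q hP hQ).1, card_union_of_disjoint hdisj]
          exact ⟨⟨union_subset (hP.trans hsub) (hQ.trans sdiff_subset), by omega⟩, hPu⟩
        · intro A _
          exact sup_inf_sdiff A (gs s)
        · rintro ⟨P, Q⟩ hPQ
          simp only [coe_product, Set.mem_prod, mem_coe, mem_powersetCard] at hPQ
          exact Prod.ext_iff.2 (hsplit P Q hPQ.1.1 hPQ.2.1)
    _ = s.choose u * (n - s).choose (m - u) := by
        rw [card_product, card_powersetCard, card_powersetCard, card_sdiff_of_subset hsub,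
          card_gs, card_gs]

end Slices

section Compression

variable {α : Type*} [DecidableEq α] {x y : α} {A B : Finset α}

lemma compress_singleton (hxy : x ≠ y) :
    compress {x} {y} A = if x ∉ A ∧ y ∈ A then insert x (A.erase y) else A := by
  unfold compress
  simp only [disjoint_singleton_left, singleton_subset_iff, sup_eq_union]
  split_ifs
  · ext z; simp only [mem_sdiff, mem_union, mem_singleton, mem_insert, mem_erase]; grind
  · rfl

lemma compress_sdiff_pair (hxy : x ≠ y) : compress {x} {y} A \ {x, y} = A \ {x, y} := by
  rw [compress_singleton hxy]
  split_ifs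
  · ext z; simp only [mem_sdiff, mem_insert, mem_erase, mem_singleton]; grind
  · rfl

lemma mem_compress_left (hxy : x ≠ y) : x ∈ compress {x} {y} A ↔ x ∈ A ∨ y ∈ A := by
  rw [compress_singleton hxy]; split_ifs <;> grind

lemma mem_compress_right (hxy : x ≠ y) : y ∈ compress {x} {y} A ↔ x ∈ A ∧ y ∈ A := by
  rw [compress_singleton hxy]; split_ifs <;> grind

-- `compress {x} {y}` only moves `x` and `y`, so intersections are compared on these two points.
lemma card_inter_eq_card_sdiff_pair_add (hxy : x ≠ y) (A B : Finset α) :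
    #(A ∩ B) = #((A \ {x, y}) ∩ (B \ {x, y})) + (if x ∈ A ∧ x ∈ B then 1 else 0) +
      (if y ∈ A ∧ y ∈ B then 1 else 0) := by
  have h := card_sdiff_add_card_inter (A ∩ B) {x, y}
  have h1 : (A ∩ B) \ {x, y} = (A \ {x, y}) ∩ (B \ {x, y}) := by
    ext; simp only [mem_sdiff, mem_inter]; tauto
  rw [h1] at h
  rw [← h]
  by_cases hx : x ∈ A ∧ x ∈ B <;> by_cases hy : y ∈ A ∧ y ∈ B <;>
    simp [hx, hy, inter_insert_of_mem, inter_insert_of_notMem, hxy]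

lemma card_inter_le_card_compress_inter_compress (hxy : x ≠ y) :
    #(A ∩ B) ≤ #(compress {x} {y} A ∩ compress {x} {y} B) := by
  rw [card_inter_eq_card_sdiff_pair_add hxy A,
    card_inter_eq_card_sdiff_pair_add hxy (compress _ _ A),
    compress_sdiff_pair hxy, compress_sdiff_pair hxy]
  simp only [mem_compress_left hxy, mem_compress_right hxy]
  by_cases x ∈ A <;> by_cases y ∈ A <;> by_cases x ∈ B <;> by_cases y ∈ B <;> simp [*]

lemma min_card_inter_le_card_inter_compress (hxy : x ≠ y) :
    min #(A ∩ B) #(compress {x} {y} A ∩ B) ≤ #(A ∩ compress {x} {y} B) := by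
  rw [card_inter_eq_card_sdiff_pair_add hxy A, card_inter_eq_card_sdiff_pair_add hxy A,
    card_inter_eq_card_sdiff_pair_add hxy (compress _ _ A),
    compress_sdiff_pair hxy, compress_sdiff_pair hxy]
  simp only [mem_compress_left hxy, mem_compress_right hxy]
  by_cases x ∈ A <;> by_cases y ∈ A <;> by_cases x ∈ B <;> by_cases y ∈ B <;> simp [*]

lemma card_compress_inter_le (hxy : x ≠ y) (S : Finset α) :
    #(compress {x} {y} A ∩ S) ≤ #(A ∩ S) + if x ∈ S ∧ y ∉ S then 1 else 0 := by
  rw [card_inter_eq_card_sdiff_pair_add hxy A,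
    card_inter_eq_card_sdiff_pair_add hxy (compress _ _ A),
    compress_sdiff_pair hxy]
  simp only [mem_compress_left hxy, mem_compress_right hxy]
  by_cases x ∈ A <;> by_cases y ∈ A <;> by_cases x ∈ S <;> by_cases y ∈ S <;> simp [*]

end Compression

lemma sum_compress_lt {x y : ℕ} {A : Finset ℕ} (hxy : x < y) (h : compress {x} {y} A ≠ A) :
    ∑ i ∈ compress {x} {y} A, i < ∑ i ∈ A, i := by
  rw [compress_singleton hxy.ne] at h ⊢
  split_ifs at h ⊢ with hA
  · rw [sum_insert (by simp [hA.1]), ← sum_erase_add _ _ hA.2]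
    omega
  · exact absurd rfl h

lemma sum_compression_lt_sum {α : Type*} [GeneralizedBooleanAlgebra α]
    [DecidableRel (@Disjoint α _ _)] [DecidableLE α] [DecidableEq α] {u v : α} {s : Finset α}
    {f : α → ℕ} (hf : ∀ a, compress u v a ≠ a → f (compress u v a) < f a)
    (h : 𝓒 u v s ≠ s) :
    ∑ a ∈ 𝓒 u v s, f a < ∑ a ∈ s, f a := by
  have hne : {a ∈ s | compress u v a ∉ s}.Nonempty := by
    contrapose! h
    rw [compression, filter_image, h, image_empty, union_empty, filter_true_of_mem]
    simpa [filter_eq_empty_iff] using h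
  rw [compression, sum_union compress_disjoint, filter_image, sum_image compress_injOn,
    ← sum_filter_add_sum_filter_not s (fun a => compress u v a ∈ s), add_lt_add_iff_left]
  refine sum_lt_sum_of_nonempty hne fun a ha => hf a ?_
  intro hfix
  rw [mem_filter, hfix] at ha
  exact ha.2 ha.1

section Shifting

variable {n m t x y : ℕ} {F G : Finset (Finset ℕ)}

lemma UniformOn.compression (hx : 0 < x) (hxy : x < y) (hF : UniformOn n m F) :
    UniformOn n m (𝓒 {x} {y} F) := by
  intro A' hA'
  obtain ⟨hA, -⟩ | ⟨-, A, hA, rfl⟩ := mem_compression.1 hA'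
  · exact hF A' hA
  obtain ⟨hAn, hAm⟩ := hF A hA
  rw [compress_singleton hxy.ne]
  split_ifs with h
  · refine ⟨insert_subset ?_ ((erase_subset _ _).trans hAn), ?_⟩
    · have := hAn h.2
      simp only [mem_gs] at this ⊢
      omega
    · rw [card_insert_of_notMem (by simp [h.1]), card_erase_of_mem h.2]
      have := card_pos.2 ⟨y, h.2⟩
      omega
  · exact ⟨hAn, hAm⟩

lemma CrossInt.compression (hxy : x ≠ y) (h : CrossInt t F G) :
    CrossInt t (𝓒 {x} {y} F) (𝓒 {x} {y} G) := by
  intro A' hA' B' hB'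
  obtain ⟨hA, hcA⟩ | ⟨-, A, hA, rfl⟩ := mem_compression.1 hA' <;>
    obtain ⟨hB, hcB⟩ | ⟨-, B, hB, rfl⟩ := mem_compression.1 hB'
  · exact h _ hA _ hB
  · exact (le_min (h _ hA _ hB) (h _ hcA _ hB)).trans (min_card_inter_le_card_inter_compress hxy)
  · rw [inter_comm]
    refine (le_min ?_ ?_).trans (min_card_inter_le_card_inter_compress hxy)
    · rw [inter_comm]; exact h _ hA _ hB
    · rw [inter_comm]; exact h _ hA _ hcB
  · exact (h _ hA _ hB).trans (card_inter_le_card_compress_inter_compress hxy)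

def Shifted (F : Finset (Finset ℕ)) : Prop :=
  ∀ ⦃x y : ℕ⦄, 0 < x → x < y → IsCompressed {x} {y} F

lemma Shifted.compress_mem (hF : Shifted F) (hx : 0 < x) (hxy : x < y) {A : Finset ℕ}
    (hA : A ∈ F) : compress {x} {y} A ∈ F :=
  (hF hx hxy).eq ▸ compress_mem_compression hA

lemma exists_shifted_crossInt {a b : ℕ} (hF : UniformOn n a F) (hG : UniformOn n b G)
    (hFG : CrossInt t F G) :
    ∃ F' G', UniformOn n a F' ∧ UniformOn n b G' ∧ CrossInt t F' G' ∧ Shifted F' ∧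
      #F' = #F ∧ #G' = #G := by
  induction hw : ∑ A ∈ F, ∑ i ∈ A, i using Nat.strong_induction_on generalizing F G with
  | _ w ih =>
  by_cases hsh : Shifted F
  · exact ⟨F, G, hF, hG, hFG, hsh, rfl, rfl⟩
  obtain ⟨x, y, hx, hxy, hne⟩ : ∃ x y, 0 < x ∧ x < y ∧ 𝓒 {x} {y} F ≠ F := by
    simpa [Shifted, IsCompressed] using hsh
  have hlt :=
    sum_compression_lt_sum (f := fun A => ∑ i ∈ A, i) (fun _ => sum_compress_lt hxy) hne
  obtain ⟨F', G', hF', hG', hFG', hsh', hcF, hcG⟩ := ih _ (hw ▸ hlt)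
    (hF.compression hx hxy) (hG.compression hx hxy) (hFG.compression hxy.ne) rfl
  exact ⟨F', G', hF', hG', hFG', hsh', hcF.trans (card_compression _ _ _),
    hcG.trans (card_compression _ _ _)⟩

end Shifting

section DensePrefix

variable {n t x : ℕ} {A B : Finset ℕ}

lemma exists_gap_of_sparse (hA : A ⊆ gs n) (hAB : t ≤ #(A ∩ B))
    (hsparse : ∀ s ≤ n, #(A ∩ gs s) + #(B ∩ gs s) < s + t) :
    ∃ x, 0 < x ∧ x ∉ A ∪ B ∧ #(A ∩ B ∩ gs (x - 1)) < t := by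
  have hsplit := fun s => card_inter_add_card_inter A B (gs s)
  by_cases hcover : gs n ⊆ A ∪ B
  · have hn := hsplit n
    rw [inter_eq_right.2 hcover, inter_eq_left.2 (inter_subset_left.trans hA), card_gs] at hn
    have := hsparse n le_rfl
    omega
  obtain ⟨x, ⟨hxn, hxAB⟩, hxmin⟩ : ∃ x, (x ∈ gs n ∧ x ∉ A ∪ B) ∧
      ∀ z < x, ¬(z ∈ gs n ∧ z ∉ A ∪ B) :=
    ⟨_, Nat.find_spec (not_subset.1 hcover), fun _ => Nat.find_min _⟩
  rw [mem_gs] at hxn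
  have hbelow : gs (x - 1) ⊆ A ∪ B := fun z hz => by
    rw [mem_gs] at hz
    by_contra hzAB
    exact hxmin z (by omega) ⟨mem_gs.2 (by omega), hzAB⟩
  have := hsplit (x - 1)
  rw [inter_eq_right.2 hbelow, card_gs] at this
  have := hsparse (x - 1) (by omega)
  exact ⟨x, hxn.1, hxAB, by omega⟩

lemma exists_common_after_gap (hA : 0 ∉ A) (hx : 0 < x) (hxAB : x ∉ A ∪ B)
    (hfew : #(A ∩ B ∩ gs (x - 1)) < t) (hAB : t ≤ #(A ∩ B)) :
    ∃ y, x < y ∧ y ∈ A ∧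
      ∀ s, x ≤ s → s < y → #(A ∩ gs s) + #(B ∩ gs s) + 1 < s + t := by
  rw [mem_union, not_or] at hxAB
  obtain ⟨y, ⟨hyAB, hxy⟩, hymin⟩ :
      ∃ y, (y ∈ A ∩ B ∧ x < y) ∧ ∀ z < y, ¬(z ∈ A ∩ B ∧ x < z) := by
    obtain ⟨z, hz, hz'⟩ := exists_mem_notMem_of_card_lt_card (hfew.trans_le hAB)
    have hz0 : z ≠ 0 := fun h => hA (h ▸ (mem_inter.1 hz).1)
    have hzx : z ≠ x := fun h => hxAB.1 (h ▸ (mem_inter.1 hz).1)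
    simp only [mem_inter, mem_gs, hz, true_and, not_and, not_le] at hz'
    have hex : ∃ y, y ∈ A ∩ B ∧ x < y := ⟨z, hz, by omega⟩
    exact ⟨_, Nat.find_spec hex, fun _ => Nat.find_min hex⟩
  refine ⟨y, hxy, (mem_inter.1 hyAB).1, fun s hxs hsy => ?_⟩
  have hmid : A ∩ B ∩ gs s ⊆ A ∩ B ∩ gs (x - 1) := by
    intro z hz
    simp only [mem_inter, mem_gs] at hz ⊢
    refine ⟨hz.1, hz.2.1, ?_⟩
    by_contra hzx
    have : z ≠ x := fun h => hxAB.1 (h ▸ hz.1.1)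
    exact hymin z (by omega) ⟨mem_inter.2 hz.1, by omega⟩
  have hunion : (A ∪ B) ∩ gs s ⊆ (gs s).erase x := fun z hz => by
    simp only [mem_inter, mem_union] at hz
    exact mem_erase.2 ⟨by rintro rfl; tauto, hz.2⟩
  have h1 := card_le_card hmid
  have h2 := card_le_card hunion
  rw [card_erase_of_mem (mem_gs.2 ⟨by omega, hxs⟩), card_gs] at h2
  have := card_inter_add_card_inter A B (gs s)
  omega

theorem Shifted.exists_dense_prefix {F : Finset (Finset ℕ)} (ht : 0 < t) (hF : Shifted F)
    (hFn : ∀ A ∈ F, A ⊆ gs n) (hB : ∀ A ∈ F, t ≤ #(A ∩ B)) (hA : A ∈ F) :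
    ∃ s ∈ gs n, s + t ≤ #(A ∩ gs s) + #(B ∩ gs s) := by
  induction hw : ∑ i ∈ A, i using Nat.strong_induction_on generalizing A with
  | _ w ih =>
  by_contra! hsparse
  have hsparse' : ∀ s ≤ n, #(A ∩ gs s) + #(B ∩ gs s) < s + t := by
    intro s hs
    rcases Nat.eq_zero_or_pos s with rfl | hs0
    · simpa [gs] using ht
    · exact hsparse s (mem_gs.2 ⟨hs0, hs⟩)
  obtain ⟨x, hx, hxAB, hfew⟩ := exists_gap_of_sparse (hFn A hA) (hB A hA) hsparse'
  obtain ⟨y, hxy, hyA, hgain⟩ := exists_common_after_gap (fun h => by simpa using hFn A hA h)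
    hx hxAB hfew (hB A hA)
  have hxA : x ∉ A := fun h => hxAB (mem_union_left _ h)
  have hchanged : compress {x} {y} A ≠ A := fun h =>
    hxA (h ▸ (mem_compress_left hxy.ne).2 (Or.inr hyA))
  obtain ⟨s, hs, hdense⟩ := ih _ (hw ▸ sum_compress_lt hxy hchanged)
    (hF.compress_mem hx hxy hA) rfl
  have hle := card_compress_inter_le (A := A) hxy.ne (gs s)
  have := hsparse s hs
  by_cases hxys : x ∈ gs s ∧ y ∉ gs s
  · rw [if_pos hxys] at hle
    rw [mem_gs, mem_gs] at hxys
    have := hgain s hxys.1.2 (by omega)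
    omega
  · rw [if_neg hxys] at hle
    omega

end DensePrefix

section Bounds

variable {n a b t : ℕ}

def sliceProducts (n a b t : ℕ) : Set ℕ :=
  {x : ℕ | ∃ u ∈ gs n, ∃ v ∈ gs n, ∃ s ∈ gs n, s + t ≤ u + v ∧
    x = s.choose u * chooseZ (n - s) ((a : ℤ) - u) *
      (s.choose v * chooseZ (n - s) ((b : ℤ) - v))}

lemma UniformOn.card_le_two_pow {m : ℕ} {F : Finset (Finset ℕ)} (hF : UniformOn n m F) :
    #F ≤ 2 ^ n := by
  simpa using card_le_card fun A hA => mem_powerset.2 (hF A hA).1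

lemma card_mul_card_le_nprod {F G : Finset (Finset ℕ)} (hF : UniformOn n a F)
    (hG : UniformOn n b G) (hFG : CrossInt t F G) : #F * #G ≤ NProd n a b t :=
  le_csSup ⟨2 ^ n * 2 ^ n, by
    rintro _ ⟨F, G, hF, hG, -, rfl⟩
    exact Nat.mul_le_mul hF.card_le_two_pow hG.card_le_two_pow⟩ ⟨F, G, hF, hG, hFG, rfl⟩

lemma le_nprod_of_mem_sliceProducts {x : ℕ} (hx : x ∈ sliceProducts n a b t) :
    x ≤ NProd n a b t := by
  obtain ⟨u, -, v, -, s, hs, huv, rfl⟩ := hx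
  rw [← card_prefixSlice (mem_gs.1 hs).2, ← card_prefixSlice (mem_gs.1 hs).2]
  exact card_mul_card_le_nprod uniformOn_prefixSlice uniformOn_prefixSlice
    (crossInt_prefixSlice huv)

lemma card_mul_card_le_of_dense_prefix (ht : 0 < t) {F G : Finset (Finset ℕ)}
    (hF : UniformOn n a F) (hG : UniformOn n b G)
    (hdense : ∀ A ∈ F, ∀ B ∈ G, ∃ s ∈ gs n, s + t ≤ #(A ∩ gs s) + #(B ∩ gs s)) :
    #F * #G ≤ n ^ 3 * sSup (sliceProducts n a b t) := by
  set T := {q ∈ gs n ×ˢ gs n ×ˢ gs n | q.2.2 + t ≤ q.1 + q.2.1}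
  have hcover : F ×ˢ G ⊆
      T.biUnion fun q => prefixSlice n a q.2.2 q.1 ×ˢ prefixSlice n b q.2.2 q.2.1 := by
    rintro ⟨A, B⟩ hAB
    obtain ⟨hA, hB⟩ := mem_product.1 hAB
    obtain ⟨s, hs, hst⟩ := hdense A hA B hB
    have hAs : #(A ∩ gs s) ≤ s := (card_le_card inter_subset_right).trans (card_gs s).le
    have hBs : #(B ∩ gs s) ≤ s := (card_le_card inter_subset_right).trans (card_gs s).le
    rw [mem_gs] at hs
    refine mem_biUnion.2 ⟨(#(A ∩ gs s), #(B ∩ gs s), s), ?_, ?_⟩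
    · simp only [T, mem_filter, mem_product, mem_gs]
      omega
    · exact mem_product.2
        ⟨mem_prefixSlice.2 ⟨hF A hA, rfl⟩, mem_prefixSlice.2 ⟨hG B hB, rfl⟩⟩
  have hpiece : ∀ q ∈ T, #(prefixSlice n a q.2.2 q.1 ×ˢ prefixSlice n b q.2.2 q.2.1) ≤
      sSup (sliceProducts n a b t) := by
    rintro ⟨u, v, s⟩ hq
    simp only [T, mem_filter, mem_product] at hq
    obtain ⟨⟨hu, hv, hs⟩, huv⟩ := hq
    rw [card_product, card_prefixSlice (mem_gs.1 hs).2, card_prefixSlice (mem_gs.1 hs).2]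
    exact le_csSup ⟨_, fun _ => le_nprod_of_mem_sliceProducts⟩
      ⟨u, hu, v, hv, s, hs, huv, rfl⟩
  have hT : #T ≤ n ^ 3 := (card_filter_le _ _).trans (by simp [card_product, pow_succ, mul_assoc])
  calc #F * #G = #(F ×ˢ G) := (card_product F G).symm
    _ ≤ _ := card_le_card hcover
    _ ≤ _ := card_biUnion_le
    _ ≤ #T * sSup (sliceProducts n a b t) := sum_le_card_nsmul _ _ _ hpiece
    _ ≤ n ^ 3 * sSup (sliceProducts n a b t) := Nat.mul_le_mul_right _ hT

lemma sSup_sliceProducts_le_nprod : sSup (sliceProducts n a b t) ≤ NProd n a b t :=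
  csSup_le' fun _ => le_nprod_of_mem_sliceProducts

lemma nprod_le_pow_three_mul (ht : 0 < t) :
    NProd n a b t ≤ n ^ 3 * sSup (sliceProducts n a b t) := by
  refine csSup_le' ?_
  rintro _ ⟨F, G, hF, hG, hFG, rfl⟩
  obtain ⟨F', G', hF', hG', hFG', hsh, hcF, hcG⟩ := exists_shifted_crossInt hF hG hFG
  rw [← hcF, ← hcG]
  exact card_mul_card_le_of_dense_prefix ht hF' hG' fun A hA B hB =>
    hsh.exists_dense_prefix ht (fun A hA => (hF' A hA).1) (fun A hA => hFG' A hA B hB) hA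

end Bounds

theorem nprod_up_to_poly_factor_general (n a b t : ℕ) (ht : 0 < t) (M : ℕ)
    (hM : M = sSup {x : ℕ | ∃ u ∈ gs n, ∃ v ∈ gs n, ∃ s ∈ gs n, s + t ≤ u + v ∧
      x = s.choose u * chooseZ (n - s) ((a : ℤ) - u) *
          (s.choose v * chooseZ (n - s) ((b : ℤ) - v))}) :
    M ≤ NProd n a b t ∧ NProd n a b t ≤ n ^ 3 * M := by
  subst hM
  exact ⟨sSup_sliceProducts_le_nprod, nprod_le_pow_three_mul ht⟩

/-- Proposition: `N_prod` up to a polynomial factor. -/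
theorem nprod_up_to_poly_factor (n a b t : ℕ) (hn : 0 < n) (ha : 0 < a) (hb : 0 < b)
    (ht : 0 < t) (M : ℕ)
    (hM : M = sSup {x : ℕ | ∃ u ∈ gs n, ∃ v ∈ gs n, ∃ s ∈ gs n, s + t ≤ u + v ∧
      x = s.choose u * chooseZ (n - s) ((a : ℤ) - u) *
          (s.choose v * chooseZ (n - s) ((b : ℤ) - v))}) :
    M ≤ NProd n a b t ∧ NProd n a b t ≤ n ^ 3 * M :=
  nprod_up_to_poly_factor_general n a b t ht M hM
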